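/- arXiv:2604.18229 — 5 statements merged into one kernel-verified Lean document; each statement's English description precedes it below -/
import Mathlib

section
/- Let a < b be real numbers and let K : [a,b] × [a,b] → ℝ be a continuous symmetric function with K(s,t) > 0 for all s, t ∈ [a,b]. Then the following are equivalent: (i) K(s,t)·K(u,u) = K(s,u)·K(u,t) for all a ≤ s ≤ u ≤ t ≤ b; (ii) there exist continuous functions f, g : [a,b] → ℝ such that K(s,t) = f(s)·g(t) for all a ≤ s ≤ t ≤ b. -/
open Set

section Markov

variable {α R : Type*} [Preorder α]

def MarkovEqOn [Mul R] (S : Set α) (K : α → α → R) : Prop :=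
  ∀ s ∈ S, ∀ u ∈ S, ∀ t ∈ S, s ≤ u → u ≤ t → K s t * K u u = K s u * K u t

theorem markovEqOn_of_eq_mul [CommMonoid R] {S : Set α} {K : α → α → R} {f g : α → R}
    (hfg : ∀ s ∈ S, ∀ t ∈ S, s ≤ t → K s t = f s * g t) : MarkovEqOn S K := by
  intro s hs u hu t ht hsu hut
  rw [hfg s hs t ht (hsu.trans hut), hfg u hu u hu le_rfl, hfg s hs u hu hsu, hfg u hu t ht hut]
  ac_rfl

theorem MarkovEqOn.eq_div_mul [Field R] {S : Set α} {K : α → α → R} {c : α}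
    (hK : MarkovEqOn S K) (hc : IsLeast S c) (hne : ∀ s ∈ S, K c s ≠ 0) :
    ∀ s ∈ S, ∀ t ∈ S, s ≤ t → K s t = K s s / K c s * K c t := by
  intro s hs t ht hst
  have h := hK c hc.1 s hs t ht (hc.2 hs) hst
  rw [div_mul_eq_mul_div, eq_div_iff (hne s hs)]
  linear_combination -h

end Markov

section Continuity

variable {X Y : Type*} [TopologicalSpace X] [TopologicalSpace Y] {K : X → X → Y} {S : Set X}

theorem ContinuousOn.diag_of_uncurry (h : ContinuousOn (fun q : X × X => K q.1 q.2) (S ×ˢ S)) :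
    ContinuousOn (fun s => K s s) S :=
  h.comp (continuousOn_id.prodMk continuousOn_id) fun _ hx => mk_mem_prod hx hx

theorem ContinuousOn.right_of_uncurry (h : ContinuousOn (fun q : X × X => K q.1 q.2) (S ×ˢ S))
    {c : X} (hc : c ∈ S) : ContinuousOn (K c) S :=
  h.comp (continuousOn_const.prodMk continuousOn_id) fun _ hx => mk_mem_prod hc hx

end Continuity

theorem markov_kernel_iff_separable_general
    (a b : ℝ) (hab : a < b) (K : ℝ → ℝ → ℝ)
    (hcont : ContinuousOn (fun q : ℝ × ℝ => K q.1 q.2) (Set.Icc a b ×ˢ Set.Icc a b))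
    (hpos : ∀ s ∈ Set.Icc a b, ∀ t ∈ Set.Icc a b, 0 < K s t) :
    (∀ s ∈ Set.Icc a b, ∀ u ∈ Set.Icc a b, ∀ t ∈ Set.Icc a b,
        s ≤ u → u ≤ t → K s t * K u u = K s u * K u t)
      ↔ (∃ f g : ℝ → ℝ, ContinuousOn f (Set.Icc a b) ∧ ContinuousOn g (Set.Icc a b) ∧
          ∀ s ∈ Set.Icc a b, ∀ t ∈ Set.Icc a b, s ≤ t → K s t = f s * g t) := by
  have ha : IsLeast (Icc a b) a := isLeast_Icc hab.le
  have hKa : ∀ s ∈ Icc a b, K a s ≠ 0 := fun s hs => (hpos a ha.1 s hs).ne'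
  refine ⟨fun hM => ?_, fun ⟨f, g, _, _, hfg⟩ => markovEqOn_of_eq_mul hfg⟩
  refine ⟨fun s => K s s / K a s, K a, ?_, hcont.right_of_uncurry ha.1,
    MarkovEqOn.eq_div_mul hM ha hKa⟩
  exact hcont.diag_of_uncurry.div (hcont.right_of_uncurry ha.1) hKa

/-- **Factorization of positive continuous kernels satisfying the Markov functional equation.**
Let `K` be a continuous symmetric positive kernel on `[a,b] × [a,b]`. Then `K` satisfies the
Markov functional equation `K(s,t) K(u,u) = K(s,u) K(u,t)` for all `a ≤ s ≤ u ≤ t ≤ b` if and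
only if there are continuous functions `f, g : [a,b] → ℝ` with `K(s,t) = f(s) g(t)` on the
upper triangle `s ≤ t`. -/
theorem markov_kernel_iff_separable
    (a b : ℝ) (hab : a < b) (K : ℝ → ℝ → ℝ)
    (hcont : ContinuousOn (fun q : ℝ × ℝ => K q.1 q.2) (Set.Icc a b ×ˢ Set.Icc a b))
    (hsymm : ∀ s ∈ Set.Icc a b, ∀ t ∈ Set.Icc a b, K s t = K t s)
    (hpos : ∀ s ∈ Set.Icc a b, ∀ t ∈ Set.Icc a b, 0 < K s t) :
    (∀ s ∈ Set.Icc a b, ∀ u ∈ Set.Icc a b, ∀ t ∈ Set.Icc a b,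
        s ≤ u → u ≤ t → K s t * K u u = K s u * K u t)
      ↔ (∃ f g : ℝ → ℝ, ContinuousOn f (Set.Icc a b) ∧ ContinuousOn g (Set.Icc a b) ∧
          ∀ s ∈ Set.Icc a b, ∀ t ∈ Set.Icc a b, s ≤ t → K s t = f s * g t) :=
  markov_kernel_iff_separable_general a b hab K hcont hpos
end

section
/- Let a < b be real numbers and let K : [a,b] × [a,b] → ℝ be a symmetric function with K(s,t) > 0 for all s, t ∈ [a,b]. Then K satisfies K(s,t)·K(u,u) = K(s,u)·K(u,t) for all a ≤ s ≤ u ≤ t ≤ b if and only if K(s,t) = K(a,t)·K(s,b) / K(a,b) for all a ≤ s ≤ t ≤ b. -/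
/-- **Endpoint characterization of the Markov functional equation.**
Let `K` be a symmetric positive kernel on `[a,b] × [a,b]`. Then `K` satisfies the Markov
functional equation `K(s,t) K(u,u) = K(s,u) K(u,t)` for all `a ≤ s ≤ u ≤ t ≤ b` if and only
if `K(s,t) = K(a,t) K(s,b) / K(a,b)` for all `a ≤ s ≤ t ≤ b`. -/
theorem markov_kernel_iff_endpoint_formula
    (a b : ℝ) (hab : a < b) (K : ℝ → ℝ → ℝ)
    (hsymm : ∀ s ∈ Set.Icc a b, ∀ t ∈ Set.Icc a b, K s t = K t s)
    (hpos : ∀ s ∈ Set.Icc a b, ∀ t ∈ Set.Icc a b, 0 < K s t) :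
    (∀ s ∈ Set.Icc a b, ∀ u ∈ Set.Icc a b, ∀ t ∈ Set.Icc a b,
        s ≤ u → u ≤ t → K s t * K u u = K s u * K u t)
      ↔ (∀ s ∈ Set.Icc a b, ∀ t ∈ Set.Icc a b, s ≤ t →
          K s t = K a t * K s b / K a b) := by
  have ha : a ∈ Set.Icc a b := ⟨le_refl a, hab.le⟩
  have hb : b ∈ Set.Icc a b := ⟨hab.le, le_refl b⟩
  constructor
  · intro hM s hs t ht hst
    have h1 := hM a ha s hs b hb hs.1 hs.2
    have h2 := hM a ha s hs t ht hs.1 hst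
    have hKas : K a s ≠ 0 := (hpos a ha s hs).ne'
    have hKab : K a b ≠ 0 := (hpos a ha b hb).ne'
    field_simp
    apply mul_right_cancel₀ hKas
    linear_combination K a t * h1 - K a b * h2
  · intro h s hs u hu t ht hsu hut
    have hKab : K a b ≠ 0 := (hpos a ha b hb).ne'
    rw [h s hs t ht (hsu.trans hut), h u hu u hu le_rfl, h s hs u hu hsu,
      h u hu t ht hut]
    field_simp
end

section
/- Let p ≥ 1 and let C be a real symmetric positive definite p × p matrix. Let M be the Markov transform of C. Then: (a) M is symmetric positive definite; (b) M agrees with C on the tridiagonal band, i.e., M_{j,k} = C_{j,k} whenever |j − k| ≤ 1; and (c) the inverse M⁻¹ is tridiagonal, i.e., (M⁻¹)_{j,k} = 0 whenever |j − k| ≥ 2. -/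
/-- The regression coefficient `β_{l+1} = C_{l,l+1} / C_{l,l}` of a matrix `C`
(0-based indices), with junk value `0` when out of range. -/
noncomputable def regressionStep {p : ℕ} (C : Matrix (Fin p) (Fin p) ℝ) (l : ℕ) : ℝ :=
  if h : l + 1 < p then
    C ⟨l, Nat.lt_of_succ_lt h⟩ ⟨l + 1, h⟩ / C ⟨l, Nat.lt_of_succ_lt h⟩ ⟨l, Nat.lt_of_succ_lt h⟩
  else 0

/-- The **Markov transform** of a matrix `C`: the symmetric matrix `M` with
`M_{j,k} = C_{j,j} ∏_{l=j}^{k−1} β_{l+1}` for `j ≤ k` (empty product `= 1`). -/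
noncomputable def markovTransform {p : ℕ} (C : Matrix (Fin p) (Fin p) ℝ) :
    Matrix (Fin p) (Fin p) ℝ :=
  Matrix.of fun j k =>
    if (j : ℕ) ≤ (k : ℕ) then C j j * ∏ l ∈ Finset.Ico (j : ℕ) (k : ℕ), regressionStep C l
    else C k k * ∏ l ∈ Finset.Ico (k : ℕ) (j : ℕ), regressionStep C l

/-!
Let `A` be the unit lower bidiagonal matrix with `-β_{k+1}` in position `(k+1, k)`. Along a row,
`M_{j,k+1} = β_{k+1} M_{j,k}` for `j ≤ k`, so `M Aᵀ` is lower triangular; hence the symmetric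
matrix `A M Aᵀ` is lower triangular, i.e. diagonal. Its diagonal entries only see entries of `M`
in the tridiagonal band, where `M = C`, so they agree with those of the positive definite
`A C Aᵀ`. As `det A = 1`, `M = A⁻¹ D A⁻ᵀ` with `D` positive diagonal, and `M⁻¹ = Aᵀ D⁻¹ A` is
tridiagonal because `A` is bidiagonal.
-/

open Matrix

namespace Matrix

variable {m n α : Type*}

theorem IsSymm.isDiag_of_isLowerTriangular [LinearOrder n] [Zero α] {S : Matrix n n α}
    (hS : S.IsSymm) (hlower : S.IsLowerTriangular) : S.IsDiag := by
  intro i j hij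
  rcases hij.lt_or_gt with h | h
  · exact hlower h
  · rw [← hS.apply]
    exact hlower h

theorem mul_mul_transpose_apply_congr [Fintype n] [NonUnitalNonAssocSemiring α]
    {A : Matrix m n α} {M N : Matrix n n α} {i k : m}
    (h : ∀ a b, A i a ≠ 0 → A k b ≠ 0 → M a b = N a b) :
    (A * M * Aᵀ) i k = (A * N * Aᵀ) i k := by
  simp only [mul_apply, transpose_apply, Finset.sum_mul]
  refine Finset.sum_congr rfl fun b _ => Finset.sum_congr rfl fun a _ => ?_
  by_cases ha : A i a = 0
  · simp [ha]
  by_cases hb : A k b = 0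
  · simp [hb]
  rw [h a b ha hb]

theorem transpose_mul_diagonal_mul_apply_eq_zero [Fintype m] [DecidableEq m]
    [NonUnitalNonAssocSemiring α] {A : Matrix m n α} {d : m → α} {j k : n}
    (h : ∀ a, A a j = 0 ∨ A a k = 0) : (Aᵀ * diagonal d * A) j k = 0 := by
  rw [mul_apply]
  refine Finset.sum_eq_zero fun a _ => ?_
  rw [mul_diagonal, transpose_apply]
  rcases h a with ha | ha <;> simp [ha]

theorem inv_eq_of_mul_mul_transpose_eq [Fintype n] [DecidableEq n] [CommRing α]
    {A M D : Matrix n n α} (hA : IsUnit A) (h : A * M * Aᵀ = D) :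
    M⁻¹ = Aᵀ * D⁻¹ * A := by
  have hAdet : IsUnit A.det := (isUnit_iff_isUnit_det A).mp hA
  have hATdet : IsUnit Aᵀ.det := by rwa [det_transpose]
  rw [← h, mul_inv_rev, mul_inv_rev, ← Matrix.mul_assoc, mul_nonsing_inv _ hATdet, one_mul,
    Matrix.mul_assoc, nonsing_inv_mul _ hAdet, mul_one]

end Matrix

section MarkovTransform

variable {p : ℕ} (C : Matrix (Fin p) (Fin p) ℝ)

theorem markovTransform_isSymm : (markovTransform C).IsSymm := by
  refine IsSymm.ext fun j k => ?_
  obtain rfl | hne := eq_or_ne j k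
  · rfl
  have hval : (j : ℕ) ≠ k := Fin.val_ne_of_ne hne
  simp only [markovTransform, of_apply]
  split_ifs <;> first | rfl | omega

theorem markovTransform_apply_self (j : Fin p) : markovTransform C j j = C j j := by
  simp [markovTransform]

theorem markovTransform_apply_succ {i : ℕ} (hi : i + 1 < p) {j : Fin p} (hj : (j : ℕ) ≤ i) :
    markovTransform C j ⟨i + 1, hi⟩ = markovTransform C j ⟨i, by omega⟩ * regressionStep C i := by
  simp only [markovTransform, of_apply]
  rw [if_pos (by omega), if_pos hj, Finset.prod_Ico_succ_top hj, mul_assoc]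

theorem markovTransform_apply_succ_self {i : ℕ} (hi : i + 1 < p)
    (hC : C ⟨i, by omega⟩ ⟨i, by omega⟩ ≠ 0) :
    markovTransform C ⟨i, by omega⟩ ⟨i + 1, hi⟩ = C ⟨i, by omega⟩ ⟨i + 1, hi⟩ := by
  rw [markovTransform_apply_succ C hi le_rfl, markovTransform_apply_self, regressionStep,
    dif_pos hi, mul_div_cancel₀ _ hC]

theorem markovTransform_apply_of_abs_sub_le_one (hC : C.IsSymm) (hdiag : ∀ i, C i i ≠ 0)
    {j k : Fin p} (hjk : |(j : ℤ) - k| ≤ 1) : markovTransform C j k = C j k := by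
  obtain ⟨j, hj⟩ := j
  obtain ⟨k, hk⟩ := k
  have : j = k ∨ k = j + 1 ∨ j = k + 1 := by
    simp only [abs_le] at hjk
    omega
  rcases this with rfl | rfl | rfl
  · exact markovTransform_apply_self C _
  · exact markovTransform_apply_succ_self C hk (hdiag _)
  · rw [← (markovTransform_isSymm C).apply, ← hC.apply]
    exact markovTransform_apply_succ_self C hj (hdiag _)

noncomputable def innovationMatrix : Matrix (Fin p) (Fin p) ℝ :=
  of fun j k => if j = k then 1 else if (k : ℕ) + 1 = j then -regressionStep C k else 0

theorem eq_or_succ_eq_of_innovationMatrix_ne_zero {j k : Fin p}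
    (h : innovationMatrix C j k ≠ 0) : (k : ℕ) = j ∨ (k : ℕ) + 1 = j := by
  contrapose! h
  simp [innovationMatrix, Fin.ext_iff, h.1.symm, h.2]

theorem innovationMatrix_isLowerTriangular : (innovationMatrix C).IsLowerTriangular := by
  intro j k (h : j < k)
  by_contra hne
  have := eq_or_succ_eq_of_innovationMatrix_ne_zero C hne
  omega

theorem det_innovationMatrix : (innovationMatrix C).det = 1 := by
  rw [det_of_isLowerTriangular _ (innovationMatrix_isLowerTriangular C)]
  exact Finset.prod_eq_one fun i _ => by simp [innovationMatrix]

theorem isUnit_innovationMatrix : IsUnit (innovationMatrix C) := by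
  rw [isUnit_iff_isUnit_det, det_innovationMatrix]
  exact isUnit_one

theorem innovationMatrix_mulVec_succ {i : ℕ} (hi : i + 1 < p) (f : Fin p → ℝ) :
    (innovationMatrix C *ᵥ f) ⟨i + 1, hi⟩ =
      f ⟨i + 1, hi⟩ - regressionStep C i * f ⟨i, by omega⟩ := by
  rw [mulVec, dotProduct, Fintype.sum_eq_add ⟨i + 1, hi⟩ ⟨i, by omega⟩ (by simp [Fin.ext_iff])]
  · simp [innovationMatrix, sub_eq_add_neg]
  · rintro b ⟨hb₁, hb₂⟩
    by_contra hne
    have := eq_or_succ_eq_of_innovationMatrix_ne_zero C (left_ne_zero_of_mul hne)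
    simp only [ne_eq, Fin.ext_iff] at hb₁ hb₂ this
    omega

theorem markovTransform_mul_transpose_innovationMatrix_isLowerTriangular :
    (markovTransform C * (innovationMatrix C)ᵀ).IsLowerTriangular := by
  rintro j ⟨_ | i, hi⟩ h
  · exact absurd h (Nat.not_lt_zero _)
  have hj : (j : ℕ) ≤ i := Nat.lt_succ_iff.mp h
  rw [mul_apply', dotProduct_comm]
  change (innovationMatrix C *ᵥ markovTransform C j) ⟨i + 1, hi⟩ = 0
  rw [innovationMatrix_mulVec_succ, markovTransform_apply_succ C hi hj, mul_comm,
    sub_self]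

theorem innovationMatrix_mul_markovTransform_mul_transpose_isDiag :
    (innovationMatrix C * markovTransform C * (innovationMatrix C)ᵀ).IsDiag := by
  refine IsSymm.isDiag_of_isLowerTriangular ?_ ?_
  · simp only [IsSymm, transpose_mul, transpose_transpose, (markovTransform_isSymm C).eq,
      Matrix.mul_assoc]
  · rw [Matrix.mul_assoc]
    exact (innovationMatrix_isLowerTriangular C).mul
      (markovTransform_mul_transpose_innovationMatrix_isLowerTriangular C)

theorem innovationMatrix_mul_markovTransform_mul_transpose_apply_self_pos (hC : C.PosDef)
    (j : Fin p) : 0 < (innovationMatrix C * markovTransform C * (innovationMatrix C)ᵀ) j j := by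
  have hband : ∀ a b, innovationMatrix C j a ≠ 0 → innovationMatrix C j b ≠ 0 →
      markovTransform C a b = C a b := by
    intro a b ha hb
    have := eq_or_succ_eq_of_innovationMatrix_ne_zero C ha
    have := eq_or_succ_eq_of_innovationMatrix_ne_zero C hb
    refine markovTransform_apply_of_abs_sub_le_one C (isHermitian_iff_isSymm.mp hC.isHermitian)
      (fun _ => hC.diag_pos.ne') ?_
    rw [abs_le]
    omega
  rw [mul_mul_transpose_apply_congr hband, ← conjTranspose_eq_transpose_of_trivial]
  exact (hC.mul_mul_conjTranspose_same
    (vecMul_injective_of_isUnit (isUnit_innovationMatrix C))).diag_pos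

end MarkovTransform

theorem markovTransform_posDef_band_tridiagonal_general
    (p : ℕ) (C : Matrix (Fin p) (Fin p) ℝ) (hpd : C.PosDef) :
    (markovTransform C).PosDef ∧
      (∀ j k : Fin p, |(j : ℤ) - (k : ℤ)| ≤ 1 → markovTransform C j k = C j k) ∧
      (∀ j k : Fin p, 2 ≤ |(j : ℤ) - (k : ℤ)| → (markovTransform C)⁻¹ j k = 0) := by
  set A := innovationMatrix C
  set D := A * markovTransform C * Aᵀ with hD_def
  have hD : D = diagonal fun j => D j j :=
    (innovationMatrix_mul_markovTransform_mul_transpose_isDiag C).diagonal_diag.symm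
  have hDpos : D.PosDef := hD ▸ PosDef.diagonal
    (innovationMatrix_mul_markovTransform_mul_transpose_apply_self_pos C hpd)
  refine ⟨?_, fun j k => markovTransform_apply_of_abs_sub_le_one C
    (isHermitian_iff_isSymm.mp hpd.isHermitian) (fun _ => hpd.diag_pos.ne'), fun j k hjk => ?_⟩
  · rw [← (isUnit_innovationMatrix C).posDef_star_right_conjugate_iff, star_eq_conjTranspose,
      conjTranspose_eq_transpose_of_trivial]
    exact hDpos
  · rw [inv_eq_of_mul_mul_transpose_eq (isUnit_innovationMatrix C) hD_def.symm, hD, inv_diagonal]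
    refine transpose_mul_diagonal_mul_apply_eq_zero fun a => ?_
    by_contra! h
    have := eq_or_succ_eq_of_innovationMatrix_ne_zero C h.1
    have := eq_or_succ_eq_of_innovationMatrix_ne_zero C h.2
    rw [le_abs] at hjk
    omega

/-- **Basic properties of the Markov transform.**
For a real symmetric positive definite matrix `C`, its Markov transform `M` is
(a) symmetric positive definite, (b) agrees with `C` on the tridiagonal band, and
(c) has tridiagonal inverse. -/
theorem markovTransform_posDef_band_tridiagonal
    (p : ℕ) (hp : 1 ≤ p) (C : Matrix (Fin p) (Fin p) ℝ) (hpd : C.PosDef) :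
    (markovTransform C).PosDef ∧
      (∀ j k : Fin p, |(j : ℤ) - (k : ℤ)| ≤ 1 → markovTransform C j k = C j k) ∧
      (∀ j k : Fin p, 2 ≤ |(j : ℤ) - (k : ℤ)| → (markovTransform C)⁻¹ j k = 0) :=
  markovTransform_posDef_band_tridiagonal_general p C hpd
end

section
/- Let I be a compact interval, K : I × I → ℝ a symmetric function with K(t,t) > 0 for all t ∈ I, and w : ℝ₊ → ℝ₊ a modulus of continuity for K, meaning |K(x₁,y₁) − K(x₂,y₂)| ≤ w(max(|x₁−x₂|, |y₁−y₂|)) for all x₁,x₂,y₁,y₂ ∈ I. Then for all t, t′ ∈ I, K(t′,t′) − K(t,t′)² / K(t,t) ≤ w(|t − t′|) · ( 1 + |K(t,t′)| / K(t,t) ). -/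
/-- **Bound on the residual regression variance via the modulus of continuity.**
Let `K` be a symmetric kernel on the compact interval `[a,b]` with positive diagonal, and let
`w` be a modulus of continuity for `K`. Then for all `t, t' ∈ [a,b]`,
`K(t',t') − K(t,t')²/K(t,t) ≤ w(|t−t'|) (1 + |K(t,t')|/K(t,t))`. -/
theorem residual_variance_modulus_bound
    (a b : ℝ) (hab : a ≤ b) (K : ℝ → ℝ → ℝ) (w : ℝ → ℝ)
    (hsymm : ∀ s ∈ Set.Icc a b, ∀ t ∈ Set.Icc a b, K s t = K t s)
    (hdiag : ∀ t ∈ Set.Icc a b, 0 < K t t)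
    (hw : ∀ x₁ ∈ Set.Icc a b, ∀ x₂ ∈ Set.Icc a b, ∀ y₁ ∈ Set.Icc a b, ∀ y₂ ∈ Set.Icc a b,
      |K x₁ y₁ - K x₂ y₂| ≤ w (max |x₁ - x₂| |y₁ - y₂|)) :
    ∀ t ∈ Set.Icc a b, ∀ t' ∈ Set.Icc a b,
      K t' t' - (K t t') ^ 2 / K t t ≤ w |t - t'| * (1 + |K t t'| / K t t) := by
  intro t ht t' ht'
  have hK := hdiag t ht
  -- bound 1 : |K t' t' - K t t'| ≤ w |t - t'|
  have h1 : |K t' t' - K t t'| ≤ w |t - t'| := by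
    have := hw t' ht' t ht t' ht' t' ht'
    simpa [abs_sub_comm t' t] using this
  -- bound 2 : |K t t - K t t'| ≤ w |t - t'|
  have h2 : |K t t - K t t'| ≤ w |t - t'| := by
    have := hw t ht t ht t ht t' ht'
    simpa using this
  have key : K t' t' - (K t t') ^ 2 / K t t
      = (K t' t' - K t t') + (K t t' / K t t) * (K t t - K t t') := by
    field_simp
    ring
  rw [key]
  have e1 : K t' t' - K t t' ≤ w |t - t'| := (le_abs_self _).trans h1
  have e2 : (K t t' / K t t) * (K t t - K t t') ≤ (|K t t'| / K t t) * w |t - t'| := by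
    calc (K t t' / K t t) * (K t t - K t t')
        ≤ |(K t t' / K t t) * (K t t - K t t')| := le_abs_self _
      _ = (|K t t'| / K t t) * |K t t - K t t'| := by
          rw [abs_mul, abs_div, abs_of_pos hK]
      _ ≤ (|K t t'| / K t t) * w |t - t'| := by
          apply mul_le_mul_of_nonneg_left h2
          positivity
  nlinarith [e1, e2]
end

section
/- Let p ≥ 3 and let Σ be a real symmetric positive definite p × p matrix whose inverse Σ⁻¹ is tridiagonal. Then for every j ∈ {2, …, p−1}, Σ_{1,p} · Σ_{j,j} = Σ_{1,j} · Σ_{j,p}. -/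
/-- **Endpoint factorization for covariances with tridiagonal inverse.**
Let `p ≥ 3` and let `Σ` be a real symmetric positive definite `p × p` matrix whose inverse is
tridiagonal (indices `1,…,p` correspond to `Fin p` indices `0,…,p−1`). Then for every interior
index `j`, `Σ_{1,p} Σ_{j,j} = Σ_{1,j} Σ_{j,p}`. -/
theorem tridiagonal_inverse_endpoint_identity
    (p : ℕ) (hp : 3 ≤ p) (S : Matrix (Fin p) (Fin p) ℝ)
    (hpd : S.PosDef)
    (htri : ∀ j k : Fin p, 2 ≤ |(j : ℤ) - (k : ℤ)| → S⁻¹ j k = 0) :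
    ∀ j : Fin p, 1 ≤ (j : ℕ) → (j : ℕ) ≤ p - 2 →
      S ⟨0, by omega⟩ ⟨p - 1, by omega⟩ * S j j =
        S ⟨0, by omega⟩ j * S j ⟨p - 1, by omega⟩ := by
  intro j hj1 hj2
  have hdet : IsUnit S.det := isUnit_iff_ne_zero.mpr hpd.det_pos.ne'
  have hinv : S⁻¹ * S = 1 := Matrix.nonsing_inv_mul S hdet
  have hinv' : S * S⁻¹ = 1 := Matrix.mul_nonsing_inv S hdet
  set f : ℕ → Fin p := fun n => ⟨n % p, Nat.mod_lt n (by omega)⟩ with hf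
  have hfval : ∀ n : ℕ, n < p → (f n : ℕ) = n := fun n hn => Nat.mod_eq_of_lt hn
  have hfj : f (j : ℕ) = j := Fin.ext (hfval _ j.isLt)
  have hentry : ∀ i k : Fin p, (∑ l, S⁻¹ i l * S l k) = if i = k then 1 else 0 := by
    intro i k
    have := congrFun (congrFun hinv i) k
    simpa [Matrix.mul_apply, Matrix.one_apply] using this
  have hv0 : ((f 0) : ℕ) = 0 := hfval 0 (by omega)
  have hv1' : ((f 1) : ℕ) = 1 := hfval 1 (by omega)
  -- the row-0 two-term identity
  have row0 : ∀ k : Fin p,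
      S⁻¹ (f 0) (f 0) * S (f 0) k + S⁻¹ (f 0) (f 1) * S (f 1) k
        = if f 0 = k then 1 else 0 := by
    intro k
    rw [← hentry (f 0) k]
    rw [← Finset.sum_subset (Finset.subset_univ ({f 0, f 1} : Finset (Fin p)))]
    · rw [Finset.sum_pair (by
        intro h; have := congrArg Fin.val h; rw [hv0, hv1'] at this; omega)]
    · intro l _ hl
      simp only [Finset.mem_insert, Finset.mem_singleton] at hl
      push_neg at hl
      have h1 : (l : ℕ) ≠ 0 := by
        intro h; exact hl.1 (Fin.ext (by rw [h, hv0]))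
      have h2 : (l : ℕ) ≠ 1 := by
        intro h; exact hl.2 (Fin.ext (by rw [h, hv1']))
      have hz : S⁻¹ (f 0) l = 0 := by
        apply htri
        rw [le_abs]
        have hlp := l.isLt
        omega
      rw [hz, zero_mul]
  -- the interior three-term identity
  have row3 : ∀ n : ℕ, 1 ≤ n → n ≤ p - 2 → ∀ k : Fin p,
      S⁻¹ (f n) (f (n-1)) * S (f (n-1)) k + S⁻¹ (f n) (f n) * S (f n) k
        + S⁻¹ (f n) (f (n+1)) * S (f (n+1)) k = if f n = k then 1 else 0 := by
    intro n hn1 hn2 k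
    have hv1 : ((f (n-1)) : ℕ) = n - 1 := hfval _ (by omega)
    have hv2 : ((f n) : ℕ) = n := hfval _ (by omega)
    have hv3 : ((f (n+1)) : ℕ) = n + 1 := hfval _ (by omega)
    rw [← hentry (f n) k]
    rw [← Finset.sum_subset
        (Finset.subset_univ ({f (n-1), f n, f (n+1)} : Finset (Fin p)))]
    · rw [Finset.sum_insert (by
        simp only [Finset.mem_insert, Finset.mem_singleton]
        push_neg
        constructor
        · intro h; have := congrArg Fin.val h; rw [hv1, hv2] at this; omega
        · intro h; have := congrArg Fin.val h; rw [hv1, hv3] at this; omega)]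
      rw [Finset.sum_pair (by
        intro h; have := congrArg Fin.val h; rw [hv2, hv3] at this; omega)]
      ring
    · intro l _ hl
      simp only [Finset.mem_insert, Finset.mem_singleton] at hl
      push_neg at hl
      have h1 : (l : ℕ) ≠ n - 1 := by
        intro h; exact hl.1 (Fin.ext (by rw [h, hv1])).symm
      have h2 : (l : ℕ) ≠ n := by
        intro h; exact hl.2.1 (Fin.ext (by rw [h, hv2])).symm
      have h3 : (l : ℕ) ≠ n + 1 := by
        intro h; exact hl.2.2 (Fin.ext (by rw [h, hv3])).symm
      have hz : S⁻¹ (f n) l = 0 := by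
        apply htri
        rw [le_abs]
        have hlp := l.isLt
        omega
      rw [hz, zero_mul]
  set z : Fin p := (⟨0, by omega⟩ : Fin p) with hzdef
  set q : Fin p := (⟨p - 1, by omega⟩ : Fin p) with hqdef
  have hfz : f 0 = z := Fin.ext hv0
  have hfq : f (p-1) = q := Fin.ext (hfval (p-1) (by omega))
  by_cases hdeg : ∃ i : ℕ, i < (j : ℕ) ∧ S⁻¹ (f i) (f (i+1)) = 0
  · -- degenerate case: the inverse is block diagonal, hence S z j = S z q = 0
    obtain ⟨i, hij, hΩ0⟩ := hdeg
    have hΩsym : ∀ a b : Fin p, S⁻¹ a b = S⁻¹ b a := by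
      intro a b
      have h := (hpd.1.inv).apply b a
      simpa using h
    set P : Matrix (Fin p) (Fin p) ℝ :=
      Matrix.diagonal (fun k : Fin p => if (k : ℕ) ≤ i then (1:ℝ) else 0) with hP
    have hzero : ∀ a b : Fin p, (a : ℕ) ≤ i → i < (b : ℕ) → S⁻¹ a b = 0 := by
      intro a b ha hb
      by_cases hab : (b : ℕ) = i + 1 ∧ (a : ℕ) = i
      · have ha' : a = f i := Fin.ext (by rw [hfval i (by omega)]; exact hab.2)
        have hb' : b = f (i+1) := Fin.ext (by rw [hfval (i+1) (by omega)]; exact hab.1)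
        rw [ha', hb']; exact hΩ0
      · apply htri
        rw [le_abs]
        have hbp := b.isLt
        omega
    have hcomm : S⁻¹ * P = P * S⁻¹ := by
      ext a b
      rw [hP, Matrix.mul_diagonal, Matrix.diagonal_mul]
      by_cases ha : (a : ℕ) ≤ i <;> by_cases hb : (b : ℕ) ≤ i
      · simp [ha, hb]
      · rw [hzero a b ha (by omega)]; simp
      · rw [hΩsym a b, hzero b a hb (by omega)]; simp
      · simp [ha, hb]
    have h1 : S * (S⁻¹ * P) * S = S * (P * S⁻¹) * S := by rw [hcomm]
    have hL : S * (S⁻¹ * P) * S = P * S := by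
      rw [← Matrix.mul_assoc, hinv', Matrix.one_mul]
    have hR : S * (P * S⁻¹) * S = S * P := by
      rw [Matrix.mul_assoc, Matrix.mul_assoc, hinv, Matrix.mul_one]
    have hcommS : S * P = P * S := by rw [← hR, h1.symm, hL]
    have hSab : ∀ b : Fin p, i < (b : ℕ) → S z b = 0 := by
      intro b hb
      have h := congrFun (congrFun hcommS z) b
      rw [hP, Matrix.mul_diagonal, Matrix.diagonal_mul] at h
      rw [if_neg (by omega : ¬ (b : ℕ) ≤ i),
        if_pos (show (z : ℕ) ≤ i from Nat.zero_le i), mul_zero, one_mul] at h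
      exact h.symm
    have h1' : S z j = 0 := hSab j (by omega)
    have h2' : S z q = 0 := hSab q (by show i < p - 1; omega)
    rw [h1', h2']; ring
  · -- nondegenerate case: Wronskian recursion
    push_neg at hdeg
    have hne0 : f 0 ≠ j := by
      intro h; have := congrArg Fin.val h; rw [hv0] at this; omega
    have hneq : ∀ n : ℕ, n ≤ (j:ℕ) → f n ≠ q := by
      intro n hn h
      have := congrArg Fin.val h
      rw [hfval n (by omega)] at this
      have : n = p - 1 := this
      omega
    have main : ∀ n : ℕ, n ≤ (j : ℕ) →
        S (f 0) j * S (f n) q - S (f 0) q * S (f n) j = 0 := by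
      intro n
      induction n using Nat.strong_induction_on with
      | _ n ih =>
        intro hn
        match n, hn with
        | 0, _ => ring
        | 1, hn =>
          have e1 := row0 j
          have e2 := row0 q
          rw [if_neg hne0] at e1
          rw [if_neg (hneq 0 (by omega))] at e2
          have hΩ : S⁻¹ (f 0) (f 1) ≠ 0 := hdeg 0 (by omega)
          have hkey : S⁻¹ (f 0) (f 1) *
              (S (f 0) j * S (f 1) q - S (f 0) q * S (f 1) j) = 0 := by
            linear_combination (S (f 0) j) * e2 - (S (f 0) q) * e1
          exact (mul_eq_zero.mp hkey).resolve_left hΩ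
        | (m+2), hn =>
          have hVm := ih m (by omega) (by omega)
          have hVm1 := ih (m+1) (by omega) (by omega)
          have e1 := row3 (m+1) (by omega) (by omega) j
          have e2 := row3 (m+1) (by omega) (by omega) q
          have hne1 : f (m+1) ≠ j := by
            intro h; have := congrArg Fin.val h
            rw [hfval (m+1) (by omega)] at this; omega
          rw [if_neg hne1] at e1
          rw [if_neg (hneq (m+1) (by omega))] at e2
          simp only [Nat.add_sub_cancel] at e1 e2
          have hΩ : S⁻¹ (f (m+1)) (f (m+2)) ≠ 0 := hdeg (m+1) (by omega)
          have hkey : S⁻¹ (f (m+1)) (f (m+2)) *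
              (S (f 0) j * S (f (m+2)) q - S (f 0) q * S (f (m+2)) j) = 0 := by
            linear_combination (S (f 0) j) * e2 - (S (f 0) q) * e1
              - (S⁻¹ (f (m+1)) (f m)) * hVm - (S⁻¹ (f (m+1)) (f (m+1))) * hVm1
          exact (mul_eq_zero.mp hkey).resolve_left hΩ
    have hVj := main (j : ℕ) le_rfl
    rw [hfz, hfj] at hVj
    linarith
end
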